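/- arXiv:2507.21351 — 9 statements merged into one kernel-verified Lean document; each statement's English description precedes it below -/
import Mathlib

section
/- Let $v_1, v_2, v_3 \in \mathbb{R}^2$ be the vertices of a triangle with corner vectors $N_i := \tfrac{1}{2} R(v_{i+2} - v_{i+1})$ and signed area $A := \tfrac{1}{2}(v_2 - v_1) \times (v_3 - v_1)$, and assume $A \ne 0$. Then for every affine function $\phi(x) = g \cdot x + b$ (with $g \in \mathbb{R}^2$, $b \in \mathbb{R}$), the discrete gradient is exact: $\tfrac{1}{A} \sum_{i=1}^{3} N_i \, \phi(v_i) = g$. -/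
/-- Counterclockwise rotation by 90 degrees in the plane. -/
def rot (a : ℝ × ℝ) : ℝ × ℝ := (-a.2, a.1)

/-- Planar cross product. -/
def cross (a b : ℝ × ℝ) : ℝ := a.1 * b.2 - a.2 * b.1

/-- Planar dot product. -/
def dot (a b : ℝ × ℝ) : ℝ := a.1 * b.1 + a.2 * b.2

/-- The discrete gradient operator on a triangle is exact on affine functions. -/
theorem discrete_gradient_exact_on_affine (v N : Fin 3 → ℝ × ℝ)
    (hN : ∀ i : Fin 3, N i = (1 / 2 : ℝ) • rot (v (i + 2) - v (i + 1)))
    (A : ℝ) (hA : A = (1 / 2) * cross (v 1 - v 0) (v 2 - v 0)) (hA0 : A ≠ 0)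
    (g : ℝ × ℝ) (b : ℝ) (φ : ℝ × ℝ → ℝ) (hφ : ∀ x, φ x = dot g x + b) :
    (1 / A) • ∑ i : Fin 3, φ (v i) • N i = g := by
  have h0 := hN 0; have h1 := hN 1; have h2 := hN 2
  simp only [Fin.sum_univ_three, hφ, h0, h1, h2]
  norm_num at h0 h1 h2 ⊢
  subst hA
  simp only [cross, dot, rot] at *
  obtain ⟨g1, g2⟩ := g
  refine Prod.ext ?_ ?_ <;> simp [Prod.ext_iff] at hA0 ⊢ <;> field_simp <;> ring
end

section
/- Let $x_c, x_{d^-}, x_{d^+}, x_{d^\star} \in \mathbb{R}^2$ be four points, and consider the two adjacent triangles $T$ with ordered vertices $(x_c, x_{d^-}, x_{d^+})$ and $T^+$ with ordered vertices $(x_c, x_{d^+}, x_{d^\star})$, with signed areas $A \ne 0$ and $A^+ \ne 0$ respectively. Denote by $N^T_v$ (resp. $N^{T^+}_v$) the corner vector of $T$ (resp. $T^+$) at vertex $v$. Then $\tfrac{1}{A}\, N^T_{d^+} \times N^T_c + \tfrac{1}{A^+}\, N^{T^+}_{d^+} \times N^{T^+}_c = 0$; that is, the contributions of the shared neighbor value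 to the discrete curl cancel between the two triangles sharing an edge. -/
noncomputable def signedArea (v₁ v₂ v₃ : ℝ × ℝ) : ℝ := (1 / 2) * cross (v₂ - v₁) (v₃ - v₁)

/-- The corner vector of a triangle `(v₁, v₂, v₃)` at `vᵢ` is `cornerVec vᵢ₊₁ vᵢ₊₂`. -/
noncomputable def cornerVec (p q : ℝ × ℝ) : ℝ × ℝ := (1 / 2 : ℝ) • rot (q - p)

theorem cross_swap (a b : ℝ × ℝ) : cross b a = -cross a b := by
  simp only [cross]; ring

theorem cross_rot_rot (a b : ℝ × ℝ) : cross (rot a) (rot b) = cross a b := by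
  simp only [cross, rot]; ring

theorem cross_smul_smul (c : ℝ) (a b : ℝ × ℝ) : cross (c • a) (c • b) = c ^ 2 * cross a b := by
  simp only [cross, Prod.smul_fst, Prod.smul_snd, smul_eq_mul]; ring

theorem cross_sub_self_right (a b : ℝ × ℝ) : cross a (b - a) = cross a b := by
  simp only [cross, Prod.fst_sub, Prod.snd_sub]; ring

theorem signedArea_rotate (v₁ v₂ v₃ : ℝ × ℝ) : signedArea v₂ v₃ v₁ = signedArea v₁ v₂ v₃ := by
  simp only [signedArea, cross, Prod.fst_sub, Prod.snd_sub]; ring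

theorem cross_cornerVec_cornerVec (v₁ v₂ v₃ : ℝ × ℝ) :
    cross (cornerVec v₁ v₂) (cornerVec v₂ v₃) = signedArea v₁ v₂ v₃ / 2 := by
  have hedge : v₃ - v₂ = (v₃ - v₁) - (v₂ - v₁) := by abel
  rw [cornerVec, cornerVec, cross_smul_smul, cross_rot_rot, hedge, cross_sub_self_right,
    signedArea]
  ring

/-- The contributions of the shared neighbor value to the discrete curl cancel
between two triangles `T = (xc, xdm, xdp)` and `T⁺ = (xc, xdp, xds)` sharing the
edge `xc xdp`. Here `NT_dp`, `NT_c` are the corner vectors of `T` at vertices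
`xdp`, `xc`, and `NTp_dp`, `NTp_c` those of `T⁺`. -/
theorem curl_contributions_cancel (xc xdm xdp xds : ℝ × ℝ)
    (A Ap : ℝ)
    (hA : A = (1 / 2) * cross (xdm - xc) (xdp - xc)) (hA0 : A ≠ 0)
    (hAp : Ap = (1 / 2) * cross (xdp - xc) (xds - xc)) (hAp0 : Ap ≠ 0)
    (NT_c NT_dp NTp_c NTp_dp : ℝ × ℝ)
    (hNT_c : NT_c = (1 / 2 : ℝ) • rot (xdp - xdm))
    (hNT_dp : NT_dp = (1 / 2 : ℝ) • rot (xdm - xc))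
    (hNTp_c : NTp_c = (1 / 2 : ℝ) • rot (xds - xdp))
    (hNTp_dp : NTp_dp = (1 / 2 : ℝ) • rot (xc - xds)) :
    (1 / A) * cross NT_dp NT_c + (1 / Ap) * cross NTp_dp NTp_c = 0 := by
  have hT : cross NT_dp NT_c = A / 2 := by
    rw [hNT_dp, hNT_c, hA]
    exact cross_cornerVec_cornerVec xc xdm xdp
  have hTp : cross NTp_dp NTp_c = -(Ap / 2) := by
    rw [hNTp_dp, hNTp_c, hAp, cross_swap]
    change -cross (cornerVec xdp xds) (cornerVec xds xc) = -(signedArea xc xdp xds / 2)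
    rw [cross_cornerVec_cornerVec, signedArea_rotate]
  rw [hT, hTp]
  field_simp
  ring
end

section
/- Consider a fan configuration around a cell center $x_c \in \mathbb{R}^2$ with neighbor centers $x_{d_1},\dots,x_{d_k}$ ($k \ge 3$, indices cyclic modulo $k$) and dual triangles $T_i = (x_c, x_{d_i}, x_{d_{i+1}})$ with signed areas $A_i \ne 0$. For arbitrary cell values $\phi_c, \phi_{d_1}, \dots, \phi_{d_k} \in \mathbb{R}$, let $G_i := \tfrac{1}{A_i}\big(N^i_c\,\phi_c + N^i_{d_i}\,\phi_{d_i} + N^i_{d_{i+1}}\,\phi_{d_{i+1}}\big)$ be the discrete gradient on $T_i$. Then the discrete curl of the discrete gradient around the cell vanishes: $\sum_{i=1}^{k} (R\,N^i_c) \cdot G_i = 0$ (discrete curl-grad identity, Proposition 3.1). -/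
/-- Discrete curl-grad identity (Proposition 3.1): in a fan configuration around
a cell center `xc`, the discrete curl of the discrete gradients of arbitrary cell
values vanishes. -/
theorem discrete_curl_grad (k : ℕ) [NeZero k] (hk : 3 ≤ k)
    (xc : ℝ × ℝ) (xd : Fin k → ℝ × ℝ)
    (Nc Nd Nd1 : Fin k → ℝ × ℝ) (A : Fin k → ℝ)
    (hNc : ∀ i : Fin k, Nc i = (1 / 2 : ℝ) • rot (xd (i + 1) - xd i))
    (hNd : ∀ i : Fin k, Nd i = (1 / 2 : ℝ) • rot (xc - xd (i + 1)))
    (hNd1 : ∀ i : Fin k, Nd1 i = (1 / 2 : ℝ) • rot (xd i - xc))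
    (hA : ∀ i : Fin k, A i = (1 / 2) * cross (xd i - xc) (xd (i + 1) - xc))
    (hA0 : ∀ i : Fin k, A i ≠ 0)
    (φc : ℝ) (φd : Fin k → ℝ) (G : Fin k → ℝ × ℝ)
    (hG : ∀ i : Fin k,
      G i = (1 / A i) • (φc • Nc i + φd i • Nd i + φd (i + 1) • Nd1 i)) :
    ∑ i : Fin k, dot (rot (Nc i)) (G i) = 0 := by
  have key : ∀ i : Fin k, dot (rot (Nc i)) (G i)
      = (1 / 2) * φd i - (1 / 2) * φd (i + 1) := by
    intro i
    have h0 := hA0 i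
    have h2 : A i * dot (rot (Nc i)) (G i)
        = A i * ((1 / 2) * φd i - (1 / 2) * φd (i + 1)) := by
      rw [hG i, hNc i, hNd i, hNd1 i]
      simp only [rot, dot, Prod.smul_mk, Prod.mk_add_mk, Prod.fst_sub, Prod.snd_sub,
        Prod.fst_add, Prod.snd_add, smul_eq_mul, Prod.smul_fst, Prod.smul_snd,
        Prod.mk_sub_mk, one_div]
      field_simp
      rw [hA i]
      simp only [cross, Prod.fst_sub, Prod.snd_sub]
      ring
    exact mul_left_cancel₀ h0 h2
  rw [Finset.sum_congr rfl (fun i _ => key i), Finset.sum_sub_distrib]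
  have : ∑ i : Fin k, (1 / 2) * φd (i + 1) = ∑ i : Fin k, (1 / 2) * φd i :=
    Fintype.sum_equiv (Equiv.addRight 1) _ _ (fun i => rfl)
  rw [this, sub_self]
end

section
/- Consider a fan configuration around a cell center $x_c \in \mathbb{R}^2$ with neighbor centers $x_{d_1},\dots,x_{d_k}$ ($k \ge 3$, indices cyclic modulo $k$) and dual triangles $T_i$ with signed areas $A_i \ne 0$. Let $\phi_c, \phi_{d_1},\dots,\phi_{d_k} : \mathbb{R} \to \mathbb{R}$ be arbitrary functions of time and let $j_1,\dots,j_k : \mathbb{R} \to \mathbb{R}^2$ be differentiable functions satisfying the semi-discrete gradient-flux evolution $j_i'(t) = -G_i(t)$, where $G_i(t) := \tfrac{1}{A_i}\big(N^i_c\,\phi_c(t) + N^i_{d_i}\,\phi_{d_i}(t) + N^i_{d_{i+1}}\,\phi_{d_{i+1}}(t)\big)$. Then the discrete curl around the cell is conserved: the function $t \mapsto \sum_{i=1}^{k} (R\,N^i_c) \cdot j_i(t)$ has zero derivative, i.e. is constant in time (curl-free involution, Proposition 3.2). -/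
/-!
Rotating the edge normal `N_c` of a dual triangle back gives (minus half) the edge
`x_{d_{i+1}} - x_{d_i}`, which is orthogonal to `N_c` and pairs with the other two corner
vectors to `± A / 2`. Hence `(R N_c) · G = (φ_{d_i} - φ_{d_{i+1}}) / 2`: the cell value `φ_c`
drops out, the area `A` cancels, and summing over the fan telescopes to zero.
-/

lemma dot_neg_right (a b : ℝ × ℝ) : dot a (-b) = -dot a b := by
  simp only [dot, Prod.fst_neg, Prod.snd_neg]
  ring

lemma dot_smul_right (a b : ℝ × ℝ) (c : ℝ) : dot a (c • b) = c * dot a b := by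
  simp only [dot, Prod.smul_fst, Prod.smul_snd, smul_eq_mul]
  ring

lemma HasDerivAt.dot_left {f : ℝ → ℝ × ℝ} {f' : ℝ × ℝ} {t : ℝ} (a : ℝ × ℝ)
    (hf : HasDerivAt f f' t) : HasDerivAt (fun s => dot a (f s)) (dot a f') t := by
  let L : (ℝ × ℝ) →L[ℝ] ℝ :=
    a.1 • ContinuousLinearMap.fst ℝ ℝ ℝ + a.2 • ContinuousLinearMap.snd ℝ ℝ ℝ
  simpa [L, dot, Function.comp_def] using L.hasFDerivAt.comp_hasDerivAt t hf

lemma Fintype.sum_sub_comp_add_right {ι M : Type*} [Fintype ι] [AddGroup ι] [AddCommGroup M]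
    (f : ι → M) (a : ι) : ∑ i, (f i - f (i + a)) = 0 := by
  rw [Finset.sum_sub_distrib, sub_eq_zero]
  exact (Fintype.sum_equiv (Equiv.addRight a) _ _ fun _ => rfl).symm

lemma dot_rot_edgeNormal_triangleGradient (xc p q : ℝ × ℝ) (A : ℝ)
    (hA : A = (1 / 2) * cross (p - xc) (q - xc)) (hA0 : A ≠ 0) (φc φp φq : ℝ) :
    dot (rot ((1 / 2 : ℝ) • rot (q - p)))
      ((1 / A) • (φc • ((1 / 2 : ℝ) • rot (q - p)) + φp • ((1 / 2 : ℝ) • rot (xc - q))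
        + φq • ((1 / 2 : ℝ) • rot (p - xc)))) = (φp - φq) / 2 := by
  have hpair : dot (rot ((1 / 2 : ℝ) • rot (q - p)))
      (φc • ((1 / 2 : ℝ) • rot (q - p)) + φp • ((1 / 2 : ℝ) • rot (xc - q))
        + φq • ((1 / 2 : ℝ) • rot (p - xc))) = A * ((φp - φq) / 2) := by
    subst hA
    simp only [rot, dot, cross, Prod.smul_mk, Prod.fst_sub, Prod.snd_sub, smul_eq_mul,
      Prod.mk_add_mk]
    ring
  rw [dot_smul_right, hpair]
  field_simp

theorem curl_free_involution_general (k : ℕ) [NeZero k]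
    (xc : ℝ × ℝ) (xd : Fin k → ℝ × ℝ)
    (Nc Nd Nd1 : Fin k → ℝ × ℝ) (A : Fin k → ℝ)
    (hNc : ∀ i : Fin k, Nc i = (1 / 2 : ℝ) • rot (xd (i + 1) - xd i))
    (hNd : ∀ i : Fin k, Nd i = (1 / 2 : ℝ) • rot (xc - xd (i + 1)))
    (hNd1 : ∀ i : Fin k, Nd1 i = (1 / 2 : ℝ) • rot (xd i - xc))
    (hA : ∀ i : Fin k, A i = (1 / 2) * cross (xd i - xc) (xd (i + 1) - xc))
    (hA0 : ∀ i : Fin k, A i ≠ 0)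
    (φc : ℝ → ℝ) (φd : Fin k → ℝ → ℝ) (G : Fin k → ℝ → ℝ × ℝ)
    (hG : ∀ (i : Fin k) (t : ℝ),
      G i t = (1 / A i) • (φc t • Nc i + φd i t • Nd i + φd (i + 1) t • Nd1 i))
    (j : Fin k → ℝ → ℝ × ℝ)
    (hj : ∀ (i : Fin k) (t : ℝ), HasDerivAt (j i) (-(G i t)) t) :
    (∀ t : ℝ, HasDerivAt (fun s => ∑ i : Fin k, dot (rot (Nc i)) (j i s)) 0 t) ∧
      (∀ t₁ t₂ : ℝ,
        ∑ i : Fin k, dot (rot (Nc i)) (j i t₁) = ∑ i : Fin k, dot (rot (Nc i)) (j i t₂)) := by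
  have hflux : ∀ i t, dot (rot (Nc i)) (G i t) = (φd i t - φd (i + 1) t) / 2 := fun i t => by
    rw [hG, hNc, hNd, hNd1]
    exact dot_rot_edgeNormal_triangleGradient _ _ _ _ (hA i) (hA0 i) _ _ _
  have hderiv : ∀ t, HasDerivAt (fun s => ∑ i : Fin k, dot (rot (Nc i)) (j i s)) 0 t := by
    intro t
    have hsum := HasDerivAt.fun_sum (u := Finset.univ) fun i _ => (hj i t).dot_left (rot (Nc i))
    rwa [Finset.sum_congr rfl fun i _ => by rw [dot_neg_right, hflux], Finset.sum_neg_distrib,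
      ← Finset.sum_div, Fintype.sum_sub_comp_add_right (φd · t), zero_div, neg_zero] at hsum
  exact ⟨hderiv, is_const_of_deriv_eq_zero (fun t => (hderiv t).differentiableAt)
    fun t => (hderiv t).deriv⟩

/-- Curl-free involution (Proposition 3.2): if the node vectors `j i` evolve by the
semi-discrete gradient-flux evolution `(j i)' = -G i`, then the discrete curl around
the cell has zero time derivative, i.e. is constant in time. -/
theorem curl_free_involution (k : ℕ) [NeZero k] (hk : 3 ≤ k)
    (xc : ℝ × ℝ) (xd : Fin k → ℝ × ℝ)
    (Nc Nd Nd1 : Fin k → ℝ × ℝ) (A : Fin k → ℝ)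
    (hNc : ∀ i : Fin k, Nc i = (1 / 2 : ℝ) • rot (xd (i + 1) - xd i))
    (hNd : ∀ i : Fin k, Nd i = (1 / 2 : ℝ) • rot (xc - xd (i + 1)))
    (hNd1 : ∀ i : Fin k, Nd1 i = (1 / 2 : ℝ) • rot (xd i - xc))
    (hA : ∀ i : Fin k, A i = (1 / 2) * cross (xd i - xc) (xd (i + 1) - xc))
    (hA0 : ∀ i : Fin k, A i ≠ 0)
    (φc : ℝ → ℝ) (φd : Fin k → ℝ → ℝ) (G : Fin k → ℝ → ℝ × ℝ)
    (hG : ∀ (i : Fin k) (t : ℝ),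
      G i t = (1 / A i) • (φc t • Nc i + φd i t • Nd i + φd (i + 1) t • Nd1 i))
    (j : Fin k → ℝ → ℝ × ℝ)
    (hj : ∀ (i : Fin k) (t : ℝ), HasDerivAt (j i) (-(G i t)) t) :
    (∀ t : ℝ, HasDerivAt (fun s => ∑ i : Fin k, dot (rot (Nc i)) (j i s)) 0 t) ∧
      (∀ t₁ t₂ : ℝ,
        ∑ i : Fin k, dot (rot (Nc i)) (j i t₁) = ∑ i : Fin k, dot (rot (Nc i)) (j i t₂)) :=
  curl_free_involution_general k xc xd Nc Nd Nd1 A hNc hNd hNd1 hA hA0 φc φd G hG j hj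
end

section
/- Let $M_1, \dots, M_N$ be symmetric positive semidefinite $2 \times 2$ real matrices, let $c > 0$, let $j_p, j_{c_1}, \dots, j_{c_N} \in \mathbb{R}^2$, and set $\beta_p := -c\,j_p$ and $f_i(j) := \tfrac{c}{2}\, j \cdot (M_i\, j)$. Then the nodal entropy production dominates the conservative flux exchange: $\beta_p \cdot \sum_{i=1}^{N} M_i\,(j_{c_i} - j_p) \;\ge\; \sum_{i=1}^{N} \big(f_i(j_p) - f_i(j_{c_i})\big)$. In particular, the dissipative part $\tfrac{c}{2}\sum_i (j_{c_i}-j_p)\cdot M_i (j_{c_i}-j_p)$ of the semi-discrete entropy rate at the node is nonnegative (local entropy inequality, Proposition 3.3). -/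
/-!
For a symmetric `A`, polarization gives
`-c x ⬝ A (y - x) = (c/2) x ⬝ A x - (c/2) y ⬝ A y + (c/2) (y - x) ⬝ A (y - x)`.
Summing over the corners with `x = j_p`, `y = j_c`, the entropy production exceeds the flux
exchange by the dissipation `(c/2) ∑ (j_c - j_p) ⬝ M (j_c - j_p)`, which is nonnegative since
every `M` is positive semidefinite and `c > 0`.
-/

open Matrix

namespace Matrix

variable {n α : Type*} [Fintype n]

theorem IsSymm.two_mul_dotProduct_mulVec_sub [CommRing α] {A : Matrix n n α} (hA : A.IsSymm)
    (x y : n → α) :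
    2 * (x ⬝ᵥ A *ᵥ (x - y)) = x ⬝ᵥ A *ᵥ x - y ⬝ᵥ A *ᵥ y + (y - x) ⬝ᵥ A *ᵥ (y - x) := by
  have hyx : y ⬝ᵥ A *ᵥ x = x ⬝ᵥ A *ᵥ y := by
    rw [← dotProduct_transpose_mulVec, hA.eq]
  simp only [mulVec_sub, dotProduct_sub, sub_dotProduct, hyx]
  ring

theorem PosSemidef.dotProduct_mulVec_self_nonneg [CommRing α] [PartialOrder α] [StarRing α]
    [TrivialStar α] {A : Matrix n n α} (hA : A.PosSemidef) (x : n → α) :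
    0 ≤ x ⬝ᵥ A *ᵥ x := by
  simpa only [star_trivial] using hA.dotProduct_mulVec_nonneg x

end Matrix

theorem neg_smul_dotProduct_mulVec_sub_eq {n K : Type*} [Fintype n] [Field K] [NeZero (2 : K)]
    {A : Matrix n n K} (hA : A.IsSymm) (c : K) (x y : n → K) :
    (-(c • x)) ⬝ᵥ A *ᵥ (y - x) - (c / 2 * (x ⬝ᵥ A *ᵥ x) - c / 2 * (y ⬝ᵥ A *ᵥ y)) =
      c / 2 * ((y - x) ⬝ᵥ A *ᵥ (y - x)) := by
  have hflip : (-(c • x)) ⬝ᵥ A *ᵥ (y - x) = c * (x ⬝ᵥ A *ᵥ (x - y)) := by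
    rw [← neg_sub x y, mulVec_neg, neg_dotProduct, dotProduct_neg, neg_neg, smul_dotProduct,
      smul_eq_mul]
  rw [hflip]
  field_simp
  linear_combination c * hA.two_mul_dotProduct_mulVec_sub x y

/-- Local entropy inequality (Proposition 3.3): the nodal entropy production dominates
the conservative flux exchange, and the dissipative part is nonnegative. -/
theorem local_entropy_inequality (N : ℕ)
    (M : Fin N → Matrix (Fin 2) (Fin 2) ℝ)
    (hM : ∀ i, (M i).PosSemidef)
    (c : ℝ) (hc : 0 < c) (jp : Fin 2 → ℝ) (jc : Fin N → Fin 2 → ℝ)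
    (βp : Fin 2 → ℝ) (hβ : βp = -(c • jp))
    (f : Fin N → (Fin 2 → ℝ) → ℝ)
    (hf : ∀ (i : Fin N) (j : Fin 2 → ℝ), f i j = (c / 2) * (j ⬝ᵥ (M i *ᵥ j))) :
    (βp ⬝ᵥ (∑ i : Fin N, M i *ᵥ (jc i - jp)) ≥ ∑ i : Fin N, (f i jp - f i (jc i))) ∧
      0 ≤ (c / 2) * ∑ i : Fin N, (jc i - jp) ⬝ᵥ (M i *ᵥ (jc i - jp)) := by
  have hdiss : ∀ i, 0 ≤ c / 2 * ((jc i - jp) ⬝ᵥ M i *ᵥ (jc i - jp)) := fun i =>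
    mul_nonneg (by positivity) ((hM i).dotProduct_mulVec_self_nonneg _)
  have hsymm : ∀ i, (M i).IsSymm := fun i => isHermitian_iff_isSymm.mp (hM i).isHermitian
  refine ⟨?_, ?_⟩
  · rw [hβ, dotProduct_sum, ge_iff_le, ← sub_nonneg, ← Finset.sum_sub_distrib]
    refine Finset.sum_nonneg fun i _ => ?_
    rw [hf, hf, neg_smul_dotProduct_mulVec_sub_eq (hsymm i)]
    exact hdiss i
  · rw [Finset.mul_sum]
    exact Finset.sum_nonneg fun i _ => hdiss i
end

section
/- Fix $\Delta t > 0$. Let $g : (0,\infty) \to \mathbb{R}^2$ and $j^n : (0,\infty) \to \mathbb{R}^2$ be functions of the relaxation parameter $\tau$ satisfying $g(\tau) \to g_0$ and $j^n(\tau) \to 0$ as $\tau \to 0^+$. For each $\tau > 0$, the implicit update equation $j^{n+1} = j^n(\tau) - \Delta t\, g(\tau) - \tfrac{\Delta t}{\tau}\, j^{n+1}$ has the unique solution $j^{n+1}(\tau) = \tfrac{\tau}{\tau + \Delta t}\,\big(j^n(\tau) - \Delta t\, g(\tau)\big)$, and in the stiff relaxation limit $\tfrac{1}{\tau}\, j^{n+1}(\tau)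 \to -g_0$ as $\tau \to 0^+$; i.e. $j^{n+1}(\tau) = -\tau\, g_0 + o(\tau)$, which is the discrete Fourier law (asymptotic preservation, Proposition 3.4). -/
open Filter Topology

/-- Asymptotic preservation of the Fourier limit (Proposition 3.4): the implicit
relaxation update has a unique solution, given by the explicit formula, and in the
stiff limit `τ → 0⁺` one has `j^{n+1}(τ)/τ → -g₀`, the discrete Fourier law. -/
theorem asymptotic_preserving_fourier (Δt : ℝ) (hΔt : 0 < Δt)
    (g jn : ℝ → ℝ × ℝ) (g0 : ℝ × ℝ)
    (hg : Tendsto g (𝓝[>] 0) (𝓝 g0))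
    (hjn : Tendsto jn (𝓝[>] 0) (𝓝 0)) :
    (∀ τ : ℝ, 0 < τ →
      ∃! jn1 : ℝ × ℝ, jn1 = jn τ - Δt • g τ - (Δt / τ) • jn1) ∧
    (∀ τ : ℝ, 0 < τ →
      (τ / (τ + Δt)) • (jn τ - Δt • g τ) =
        jn τ - Δt • g τ - (Δt / τ) • ((τ / (τ + Δt)) • (jn τ - Δt • g τ))) ∧
    Tendsto (fun τ : ℝ => (1 / τ) • ((τ / (τ + Δt)) • (jn τ - Δt • g τ)))
      (𝓝[>] 0) (𝓝 (-g0)) := by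
  have key : ∀ τ : ℝ, 0 < τ → ∀ a : ℝ × ℝ,
      (τ / (τ + Δt)) • a = a - (Δt / τ) • ((τ / (τ + Δt)) • a) := by
    intro τ hτ a
    have hτΔ : τ + Δt ≠ 0 := by positivity
    have h1 : (τ / (τ + Δt)) + (Δt / τ) * (τ / (τ + Δt)) = 1 := by
      field_simp
    calc (τ / (τ + Δt)) • a
        = (1 : ℝ) • a - ((Δt / τ) * (τ / (τ + Δt))) • a := by
          rw [← h1, add_smul]; abel
      _ = a - (Δt / τ) • ((τ / (τ + Δt)) • a) := by
          rw [one_smul, mul_smul]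
  refine ⟨?_, fun τ hτ => key τ hτ _, ?_⟩
  · intro τ hτ
    refine ⟨(τ / (τ + Δt)) • (jn τ - Δt • g τ), key τ hτ _, ?_⟩
    intro y hy
    have hc : (1 + Δt / τ) ≠ 0 := by positivity
    have hy' : (1 + Δt / τ) • y = jn τ - Δt • g τ := by
      rw [add_smul, one_smul]; nth_rewrite 1 [hy]; abel
    have hval : (1 + Δt / τ) • ((τ / (τ + Δt)) • (jn τ - Δt • g τ))
        = jn τ - Δt • g τ := by
      rw [smul_smul]
      have : (1 + Δt / τ) * (τ / (τ + Δt)) = 1 := by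
        have hτΔ : τ + Δt ≠ 0 := by positivity
        field_simp
      rw [this, one_smul]
    have := hy'.trans hval.symm
    exact smul_right_injective (ℝ × ℝ) hc this
  · have heq : ∀ᶠ τ in 𝓝[>] (0:ℝ),
        (1 / τ) • ((τ / (τ + Δt)) • (jn τ - Δt • g τ))
          = (1 / (τ + Δt)) • (jn τ - Δt • g τ) := by
      filter_upwards [self_mem_nhdsWithin] with τ (hτ : 0 < τ)
      rw [smul_smul]
      congr 1
      field_simp
    have hlim : Tendsto (fun τ : ℝ => (1 / (τ + Δt)) • (jn τ - Δt • g τ))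
        (𝓝[>] 0) (𝓝 (-g0)) := by
      have h1 : Tendsto (fun τ : ℝ => 1 / (τ + Δt)) (𝓝[>] 0) (𝓝 (1 / Δt)) := by
        have h0 : Tendsto (fun τ : ℝ => τ + Δt) (𝓝[>] 0) (𝓝 (0 + Δt)) :=
          (tendsto_id.add tendsto_const_nhds).mono_left nhdsWithin_le_nhds
        rw [zero_add] at h0
        simpa only [one_div] using h0.inv₀ hΔt.ne'
      have h2 : Tendsto (fun τ : ℝ => jn τ - Δt • g τ) (𝓝[>] 0) (𝓝 (0 - Δt • g0)) :=
        hjn.sub (hg.const_smul Δt)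
      have := h1.smul h2
      convert this using 2
      rw [zero_sub, smul_neg, smul_smul, one_div, inv_mul_cancel₀ hΔt.ne', one_smul]
    exact hlim.congr' (EventuallyEq.symm heq)
end

section
/- Let $V$ be a real inner product space, let $p_c, p_d, \hat{H}, H_c, H_d \in V$ with $p_c \ne p_d$, and let $F_c, F_d \in \mathbb{R}$. Define the scalar correction factor $\alpha := \dfrac{(F_d - F_c) + \hat{H} \cdot (p_d - p_c) - (p_d \cdot H_d - p_c \cdot H_c)}{\|p_d - p_c\|^2}$ and the corrected flux $\tilde{H} := \hat{H} - \alpha\,(p_d - p_c)$. Then the entropy conservation condition holds exactly: $p_c \cdot (\tilde{H} - H_c) + p_d \cdot (H_d - \tilde{H}) = F_d - F_c$. -/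
open RealInnerProductSpace

/-! Writing `q = p_d - p_c`, the left-hand side equals `⟪p_d, H_d⟫ - ⟪p_c, H_c⟫ - ⟪q, H̃⟫`, and
`⟪q, Ĥ - α • q⟫ = ⟪q, Ĥ⟫ - α ‖q‖²`. Since `q ≠ 0`, the factor `α` is exactly the one that turns
this into `F_d - F_c`. -/

section

variable {V : Type*} [NormedAddCommGroup V] [InnerProductSpace ℝ V]

theorem real_inner_fluctuation_sum (pc pd H Hc Hd : V) :
    ⟪pc, H - Hc⟫ + ⟪pd, Hd - H⟫ = ⟪pd, Hd⟫ - ⟪pc, Hc⟫ - ⟪pd - pc, H⟫ := by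
  simp only [inner_sub_left, inner_sub_right]
  ring

theorem real_inner_sub_smul_self (v H : V) (a : ℝ) :
    ⟪v, H - a • v⟫ = ⟪v, H⟫ - a * ‖v‖ ^ 2 := by
  rw [inner_sub_right, real_inner_smul_right, real_inner_self_eq_norm_sq]

end

/-- The scalar flux correction factor (eq. (3.45)) enforces the entropy conservation
condition (eq. (3.44)) exactly across a face. -/
theorem flux_correction_entropy_conservation
    {V : Type*} [NormedAddCommGroup V] [InnerProductSpace ℝ V]
    (pc pd Hhat Hc Hd : V) (hne : pc ≠ pd) (Fc Fd : ℝ)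
    (α : ℝ)
    (hα : α = ((Fd - Fc) + ⟪Hhat, pd - pc⟫ - (⟪pd, Hd⟫ - ⟪pc, Hc⟫)) / ‖pd - pc‖ ^ 2)
    (Htil : V) (hH : Htil = Hhat - α • (pd - pc)) :
    ⟪pc, Htil - Hc⟫ + ⟪pd, Hd - Htil⟫ = Fd - Fc := by
  have hnorm : ‖pd - pc‖ ^ 2 ≠ 0 :=
    pow_ne_zero 2 (norm_ne_zero_iff.mpr (sub_ne_zero.mpr hne.symm))
  have hα_mul : α * ‖pd - pc‖ ^ 2
      = (Fd - Fc) + ⟪Hhat, pd - pc⟫ - (⟪pd, Hd⟫ - ⟪pc, Hc⟫) := by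
    rw [hα, div_mul_cancel₀ _ hnorm]
  rw [real_inner_fluctuation_sum, hH, real_inner_sub_smul_self, hα_mul, real_inner_comm Hhat]
  ring
end

section
/- Let $m \ge 1$, let $F$ be a finite index set (the faces of a cell $c$), let $V > 0$, $p_c, S \in \mathbb{R}^m$, and for each $f \in F$ let $\ell_f \in \mathbb{R}$, $p_d^f, \tilde{H}_f, H_c^f, H_d^f \in \mathbb{R}^m$ and $F_c^f, F_d^f \in \mathbb{R}$. Assume: (i) for every $f \in F$ the per-face conservation condition $p_c \cdot (\tilde{H}_f - H_c^f) + p_d^f \cdot (H_d^f - \tilde{H}_f) = F_d^f - F_c^f$ holds; (ii) the discrete Gauss identity $\sum_{f \in F} \ell_f\, (F_c^f - p_c \cdot H_c^f) = 0$ holds. Define the compatible entropy flux $\mathcal{F}_f := \tfrac{1}{2}\big[(p_c \cdot \tilde{H}_f + F_c^f - p_c \cdot H_c^f) + (p_d^f \cdot \tilde{H}_f + F_d^f - p_d^f \cdot H_d^f)\big]$. Then dotting the semi-discrete scheme with the dual variables yields the semi-discrete entropy balance: $p_c \cdot \Big( -\tfrac{1}{V} \sum_{f \in F} \ell_f\,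 \tilde{H}_f + S \Big) = -\tfrac{1}{V} \sum_{f \in F} \ell_f\, \mathcal{F}_f + p_c \cdot S$ (thermodynamically compatible semi-discrete scheme, Proposition 3.5). -/
open Matrix

/-- Thermodynamically compatible semi-discrete scheme (Proposition 3.5): dotting the
semi-discrete finite volume scheme with the dual variables yields a semi-discrete
entropy balance with the compatible entropy fluxes. -/
theorem semidiscrete_entropy_balance (m : ℕ) (hm : 1 ≤ m)
    {F : Type*} [Fintype F]
    (V : ℝ) (hV : 0 < V) (pc S : Fin m → ℝ)
    (ℓ : F → ℝ) (pd Htil Hc Hd : F → Fin m → ℝ) (Fc Fd : F → ℝ)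
    (hcons : ∀ f : F,
      pc ⬝ᵥ (Htil f - Hc f) + pd f ⬝ᵥ (Hd f - Htil f) = Fd f - Fc f)
    (hgauss : ∑ f : F, ℓ f * (Fc f - pc ⬝ᵥ Hc f) = 0)
    (𝓕 : F → ℝ)
    (h𝓕 : ∀ f : F, 𝓕 f = (1 / 2) *
      ((pc ⬝ᵥ Htil f + Fc f - pc ⬝ᵥ Hc f) + (pd f ⬝ᵥ Htil f + Fd f - pd f ⬝ᵥ Hd f))) :
    pc ⬝ᵥ (-(1 / V) • ∑ f : F, ℓ f • Htil f + S) =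
      -(1 / V) * ∑ f : F, ℓ f * 𝓕 f + pc ⬝ᵥ S := by
  have key : ∀ f : F, 𝓕 f = pc ⬝ᵥ Htil f + (Fc f - pc ⬝ᵥ Hc f) := by
    intro f
    have h := hcons f
    simp only [dotProduct_sub] at h
    rw [h𝓕 f]; linarith
  have hsum : ∑ f : F, ℓ f * 𝓕 f = ∑ f : F, ℓ f * (pc ⬝ᵥ Htil f) := by
    calc ∑ f : F, ℓ f * 𝓕 f
        = ∑ f : F, (ℓ f * (pc ⬝ᵥ Htil f) + ℓ f * (Fc f - pc ⬝ᵥ Hc f)) := by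
          refine Finset.sum_congr rfl fun f _ => ?_
          rw [key f]; ring
      _ = ∑ f : F, ℓ f * (pc ⬝ᵥ Htil f) := by
          rw [Finset.sum_add_distrib, hgauss, add_zero]
  rw [hsum, dotProduct_add, dotProduct_smul]
  have : pc ⬝ᵥ ∑ f : F, ℓ f • Htil f = ∑ f : F, ℓ f * (pc ⬝ᵥ Htil f) := by
    simp only [dotProduct, Finset.sum_apply, Pi.smul_apply, smul_eq_mul,
      Finset.mul_sum]
    rw [Finset.sum_comm]
    exact Finset.sum_congr rfl fun y _ => Finset.sum_congr rfl fun x _ => by ring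
  rw [this, smul_eq_mul]
end

section
/- Let $A$ be the $3 \times 3$ real matrix with rows $(1,0,1)$, $(-1,1,0)$, $(0,-1,-1)$, let $L := A A^{\top}$, $\Pi := \tfrac{1}{3}\mathbf{1}\mathbf{1}^{\top}$, and for some $\nu \ne 0$ let $L^{\dagger} := (L + \nu \Pi)^{-1} - \tfrac{1}{\nu}\Pi$. Then for every $b \in \mathbb{R}^3$ with $\mathbf{1}^{\top} b = 0$, the subflux vector $\hat{F} := -A^{\top} L^{\dagger}\, b$ satisfies $A \hat{F} = -b$; i.e. the reconstructed internal subfluxes exactly reproduce the prescribed subcell residuals. -/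
open Matrix

/-- The adjacency matrix (3.36) of the subgrid of a dual triangular cell. -/
def Amat : Matrix (Fin 3) (Fin 3) ℝ := !![1, 0, 1; -1, 1, 0; 0, -1, -1]

/-- The graph Laplacian of the subcell connectivity. -/
def Lmat : Matrix (Fin 3) (Fin 3) ℝ := Amat * Amatᵀ

/-- The orthogonal projection onto the span of the all-ones vector. -/
noncomputable def PiMat : Matrix (Fin 3) (Fin 3) ℝ :=
  (1 / 3 : ℝ) • Matrix.of (fun _ _ => (1 : ℝ))

/-!
`Π` is idempotent and `LΠ = ΠL = 0`, because every column of `A` sums to zero. Hence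
`M = L + νΠ` satisfies `ΠM = νΠ`, so `ΠM⁻¹ = ν⁻¹Π` and `LL† = LM⁻¹ = 1 - Π`. Therefore
`AF̂ = -AAᵀL†b = -(1 - Π)b = -b`, as `Πb = 0` is the compatibility condition `𝟙ᵀb = 0`.
-/

namespace Matrix

variable {n K : Type*} [Fintype n] [DecidableEq n] [Field K]

theorem proj_mul_inv_add_smul {L P : Matrix n n K} {ν : K} (hPL : P * L = 0) (hP : P * P = P)
    (hν : ν ≠ 0) (hM : IsUnit (L + ν • P).det) : P * (L + ν • P)⁻¹ = ν⁻¹ • P := by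
  have hPM : P * (L + ν • P) = ν • P := by rw [mul_add, hPL, mul_smul_comm, hP, zero_add]
  calc P * (L + ν • P)⁻¹ = ν⁻¹ • (ν • P) * (L + ν • P)⁻¹ := by
        rw [smul_smul, inv_mul_cancel₀ hν, one_smul]
    _ = ν⁻¹ • (P * (L + ν • P) * (L + ν • P)⁻¹) := by rw [smul_mul_assoc, hPM]
    _ = ν⁻¹ • P := by rw [mul_assoc, mul_nonsing_inv _ hM, mul_one]

theorem mul_inv_add_smul_sub_smul {L P : Matrix n n K} {ν : K} (hLP : L * P = 0)
    (hPL : P * L = 0) (hP : P * P = P) (hν : ν ≠ 0) (hM : IsUnit (L + ν • P).det) :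
    L * ((L + ν • P)⁻¹ - (1 / ν) • P) = 1 - P := by
  have hLM : L * (L + ν • P)⁻¹ = 1 - P := by
    rw [eq_sub_iff_add_eq]
    calc L * (L + ν • P)⁻¹ + P = L * (L + ν • P)⁻¹ + ν • (P * (L + ν • P)⁻¹) := by
          rw [proj_mul_inv_add_smul hPL hP hν hM, smul_smul, mul_inv_cancel₀ hν, one_smul]
      _ = 1 := by rw [← smul_mul_assoc, ← add_mul, mul_nonsing_inv _ hM]
  rw [mul_sub, hLM, mul_smul_comm, hLP, smul_zero, sub_zero]

end Matrix

theorem PiMat_mul_Amat : PiMat * Amat = 0 := by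
  ext i j
  fin_cases i <;> fin_cases j <;> simp [PiMat, Amat, mul_apply, Fin.sum_univ_three]

theorem PiMat_mul_Lmat : PiMat * Lmat = 0 := by
  rw [Lmat, ← Matrix.mul_assoc, PiMat_mul_Amat, Matrix.zero_mul]

theorem PiMat_transpose : PiMatᵀ = PiMat := by
  rw [PiMat, transpose_smul]
  rfl

theorem Lmat_transpose : Lmatᵀ = Lmat := (isSymm_mul_transpose_self Amat).eq

theorem Lmat_mul_PiMat : Lmat * PiMat = 0 := by
  rw [← transpose_eq_zero, transpose_mul, PiMat_transpose, Lmat_transpose, PiMat_mul_Lmat]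

theorem PiMat_mul_self : PiMat * PiMat = PiMat := by
  ext i j
  simp [PiMat, mul_apply]

theorem Lmat_eq : Lmat = !![2, -1, -1; -1, 2, -1; -1, -1, 2] := by
  ext i j
  fin_cases i <;> fin_cases j <;> norm_num [Lmat, Amat, mul_apply, Fin.sum_univ_three, cons_val_two]

theorem det_Lmat_add_smul_PiMat (ν : ℝ) : (Lmat + ν • PiMat).det = 9 * ν := by
  rw [det_fin_three]
  simp [Lmat_eq, PiMat]
  ring

theorem PiMat_mulVec_eq_zero {b : Fin 3 → ℝ} (hb : ∑ i, b i = 0) : PiMat *ᵥ b = 0 := by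
  ext i
  simp [PiMat, mulVec, dotProduct, ← Finset.mul_sum, hb]

/-- Subflux reconstruction (eq. (3.40)): for any residual `b` with zero total sum,
the reconstructed internal subfluxes `F̂ = -Aᵀ L† b` satisfy `A F̂ = -b`. -/
theorem subflux_reconstruction_exact (ν : ℝ) (hν : ν ≠ 0)
    (Ldag : Matrix (Fin 3) (Fin 3) ℝ)
    (hLdag : Ldag = (Lmat + ν • PiMat)⁻¹ - (1 / ν) • PiMat)
    (b : Fin 3 → ℝ) (hb : ∑ i : Fin 3, b i = 0)
    (Fhat : Fin 3 → ℝ) (hFhat : Fhat = -(Amatᵀ *ᵥ (Ldag *ᵥ b))) :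
    Amat *ᵥ Fhat = -b := by
  have hdet : IsUnit (Lmat + ν • PiMat).det := by
    rw [det_Lmat_add_smul_PiMat]
    exact (mul_ne_zero (by norm_num) hν).isUnit
  have hLLdag : Lmat * Ldag = 1 - PiMat := by
    rw [hLdag]
    exact mul_inv_add_smul_sub_smul Lmat_mul_PiMat PiMat_mul_Lmat PiMat_mul_self hν hdet
  calc Amat *ᵥ Fhat = -((Lmat * Ldag) *ᵥ b) := by
        rw [hFhat, mulVec_neg, mulVec_mulVec, mulVec_mulVec, Lmat, Matrix.mul_assoc]
    _ = -b := by rw [hLLdag, sub_mulVec, one_mulVec, PiMat_mulVec_eq_zero hb, sub_zero]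
end
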